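/- arXiv:2206.12511 — 6 statements merged into one kernel-verified Lean document; each statement's English description precedes it below -/
import Mathlib

section
/- If a sequence of random variables (Y_n) converges in probability to Y, where each Y_n is a finite convex combination of random variables all having the same distribution F with finite first moment, then for every continuous convex function φ (for which the relevant expectations exist), E[φ(Y)] ≤ E[φ(X)] for any X with distribution F. In other words, every element of the closure in probability of the convex hull of F-distributed random variables is dominated in convex order by F. -/
/-!
Jensen's inequality puts every convex combination `∑ λᵢ Zᵢ` of copies of `X` below `X` in convex
order, and this order passes to limits in probability. For a nonnegative convex `ψ`, Fatou's lemma
along an a.e. convergent subsequence gives `E ψ(Y) ≤ liminf E ψ(Yₙ) ≤ E ψ(X)`. A general convex `ψ`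
is an affine function plus a nonnegative convex one, so it remains to see `E Y = E X`; this needs
uniform integrability, which the convex order itself supplies: `E (|Yₙ| - K)⁺ ≤ E (|X| - K)⁺ → 0`.
-/

open MeasureTheory ProbabilityTheory Filter Set Topology

def ConvexOrderLE {Ω : Type*} [MeasurableSpace Ω] (P : Measure Ω) (Y X : Ω → ℝ) : Prop :=
  ∀ ψ : ℝ → ℝ, Continuous ψ → ConvexOn ℝ univ ψ → Integrable (fun ω => ψ (X ω)) P →
    Integrable (fun ω => ψ (Y ω)) P ∧ ∫ ω, ψ (Y ω) ∂P ≤ ∫ ω, ψ (X ω) ∂P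

def absExcess (K x : ℝ) : ℝ := max (|x| - K) 0

lemma absExcess_nonneg (K x : ℝ) : 0 ≤ absExcess K x := le_max_right _ _

lemma absExcess_le_abs {K : ℝ} (hK : 0 ≤ K) (x : ℝ) : absExcess K x ≤ |x| :=
  max_le (by linarith) (abs_nonneg x)

lemma continuous_absExcess (K : ℝ) : Continuous (absExcess K) := by
  unfold absExcess
  fun_prop

lemma convexOn_absExcess (K : ℝ) : ConvexOn ℝ univ (absExcess K) := by
  have habs : ConvexOn ℝ univ fun x : ℝ => |x| := convexOn_norm convex_univ
  have h : ConvexOn ℝ univ fun x : ℝ => |x| - K := habs.add_const (-K)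
  exact h.sup (convexOn_const 0 convex_univ)

def clamp (K x : ℝ) : ℝ := max (-K) (min x K)

lemma continuous_clamp (K : ℝ) : Continuous (clamp K) := by
  unfold clamp
  fun_prop

lemma abs_clamp_le {K : ℝ} (hK : 0 ≤ K) (x : ℝ) : |clamp K x| ≤ K := by
  unfold clamp
  simp only [abs_le]
  grind

lemma abs_clamp_le_abs {K : ℝ} (hK : 0 ≤ K) (x : ℝ) : |clamp K x| ≤ |x| := by
  unfold clamp
  simp only [abs_le, le_abs, neg_le]
  grind

lemma abs_sub_clamp {K : ℝ} (hK : 0 ≤ K) (x : ℝ) : |x - clamp K x| = absExcess K x := by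
  unfold absExcess clamp
  rcases le_total x K with h | h <;> rcases le_total (-K) x with h' | h' <;>
    simp [abs_of_nonneg, *] <;> grind

lemma exists_affine_le_of_convexOn_univ {ψ : ℝ → ℝ} (hψc : Continuous ψ)
    (hψ : ConvexOn ℝ univ ψ) : ∃ c c' : ℝ, ∀ x, c * x + c' ≤ ψ x :=
  let ⟨c, c', h⟩ := hψ.exists_affine_le_real isClosed_univ
    (hψc.lowerSemicontinuous.lowerSemicontinuousOn univ)
  ⟨c, c', fun x => h x (mem_univ x)⟩

section

variable {Ω : Type*} [MeasurableSpace Ω] {P : Measure Ω} {X Y : Ω → ℝ}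

lemma MeasureTheory.Integrable.absExcess (hX : Integrable X P) {K : ℝ} (hK : 0 ≤ K) :
    Integrable (fun ω => absExcess K (X ω)) P :=
  hX.mono ((continuous_absExcess K).comp_aestronglyMeasurable hX.1) (ae_of_all _ fun ω => by
    simpa only [Real.norm_eq_abs, abs_of_nonneg (absExcess_nonneg _ _)]
      using absExcess_le_abs hK (X ω))

lemma tendsto_integral_absExcess_atTop (hX : Integrable X P) :
    Tendsto (fun K : ℕ => ∫ ω, absExcess K (X ω) ∂P) atTop (𝓝 0) := by
  have hlim : ∀ ω, Tendsto (fun K : ℕ => absExcess K (X ω)) atTop (𝓝 0) := fun ω =>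
    tendsto_atTop_of_eventually_const (i₀ := ⌈|X ω|⌉₊) fun K hK =>
      max_eq_right (by linarith [Nat.ceil_le.1 hK])
  simpa using tendsto_integral_of_dominated_convergence (fun ω => |X ω|)
    (fun K => (continuous_absExcess K).comp_aestronglyMeasurable hX.1) hX.abs
    (fun K => ae_of_all _ fun ω => by
      rw [Real.norm_of_nonneg (absExcess_nonneg _ _)]
      exact absExcess_le_abs K.cast_nonneg _)
    (ae_of_all _ hlim)

lemma abs_integral_sub_integral_clamp_le (hX : Integrable X P) {K : ℝ} (hK : 0 ≤ K) :
    |∫ ω, X ω ∂P - ∫ ω, clamp K (X ω) ∂P| ≤ ∫ ω, absExcess K (X ω) ∂P := by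
  have hclamp : Integrable (fun ω => clamp K (X ω)) P :=
    hX.mono ((continuous_clamp K).comp_aestronglyMeasurable hX.1)
      (ae_of_all _ fun ω => abs_clamp_le_abs hK (X ω))
  rw [← integral_sub hX hclamp]
  exact abs_integral_le_integral_abs.trans_eq
    (integral_congr_ae (ae_of_all _ fun ω => abs_sub_clamp hK (X ω)))

lemma integrable_and_integral_le_of_tendsto_ae {W : ℕ → Ω → ℝ} {V : Ω → ℝ} {C : ℝ}
    (hW : ∀ n, Integrable (W n) P) (hW0 : ∀ n, 0 ≤ᵐ[P] W n) (hWC : ∀ n, ∫ ω, W n ω ∂P ≤ C)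
    (hlim : ∀ᵐ ω ∂P, Tendsto (fun n => W n ω) atTop (𝓝 (V ω))) :
    Integrable V P ∧ ∫ ω, V ω ∂P ≤ C := by
  have hV : AEStronglyMeasurable V P :=
    aestronglyMeasurable_of_tendsto_ae atTop (fun n => (hW n).1) hlim
  have hV0 : 0 ≤ᵐ[P] V := by
    filter_upwards [hlim, ae_all_iff.2 hW0] with ω hω hω0
    exact ge_of_tendsto' hω hω0
  have hC : 0 ≤ C := (integral_nonneg_of_ae (hW0 0)).trans (hWC 0)
  have fatou : ∫⁻ ω, ENNReal.ofReal (V ω) ∂P ≤ ENNReal.ofReal C := calc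
    ∫⁻ ω, ENNReal.ofReal (V ω) ∂P
        = ∫⁻ ω, liminf (fun n => ENNReal.ofReal (W n ω)) atTop ∂P :=
          lintegral_congr_ae <| by
            filter_upwards [hlim] with ω hω
            exact ((ENNReal.continuous_ofReal.tendsto _).comp hω).liminf_eq.symm
    _ ≤ liminf (fun n => ∫⁻ ω, ENNReal.ofReal (W n ω) ∂P) atTop :=
          lintegral_liminf_le' fun n => (hW n).aemeasurable.ennreal_ofReal
    _ ≤ ENNReal.ofReal C := liminf_le_of_frequently_le' <| Frequently.of_forall fun n => by
          rw [← ofReal_integral_eq_lintegral_ofReal (hW n) (hW0 n)]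
          exact ENNReal.ofReal_le_ofReal (hWC n)
  refine ⟨⟨hV, (hasFiniteIntegral_iff_ofReal hV0).2 (fatou.trans_lt ENNReal.ofReal_lt_top)⟩, ?_⟩
  rw [integral_eq_lintegral_of_nonneg_ae hV0 hV]
  exact ENNReal.toReal_le_of_le_ofReal hC fatou

lemma integral_eq_of_tendsto_ae_of_absExcess_le [IsFiniteMeasure P] {W : ℕ → Ω → ℝ} {c : ℝ}
    {ε : ℕ → ℝ} (hW : ∀ n, Integrable (W n) P) (hWc : ∀ n, ∫ ω, W n ω ∂P = c)
    (hY : Integrable Y P) (hlim : ∀ᵐ ω ∂P, Tendsto (fun n => W n ω) atTop (𝓝 (Y ω)))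
    (hε : Tendsto ε atTop (𝓝 0))
    (hWε : ∀ (K : ℕ) n, ∫ ω, absExcess K (W n ω) ∂P ≤ ε K)
    (hYε : ∀ K : ℕ, ∫ ω, absExcess K (Y ω) ∂P ≤ ε K) :
    ∫ ω, Y ω ∂P = c := by
  have hclamp : ∀ K : ℕ, Tendsto (fun n => ∫ ω, clamp K (W n ω) ∂P) atTop
      (𝓝 (∫ ω, clamp K (Y ω) ∂P)) := fun K =>
    tendsto_integral_of_dominated_convergence (fun _ => (K : ℝ))
      (fun n => (continuous_clamp K).comp_aestronglyMeasurable (hW n).1) (integrable_const _)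
      (fun n => ae_of_all _ fun ω => abs_clamp_le K.cast_nonneg _)
      (by filter_upwards [hlim] with ω hω using ((continuous_clamp K).tendsto _).comp hω)
  have hbound : ∀ K : ℕ, |∫ ω, Y ω ∂P - c| ≤ 2 * ε K := fun K => by
    have hW' : |c - ∫ ω, clamp K (Y ω) ∂P| ≤ ε K :=
      le_of_tendsto' ((hclamp K).const_sub c).abs fun n =>
        (hWc n ▸ abs_integral_sub_integral_clamp_le (hW n) K.cast_nonneg).trans (hWε K n)
    have hY' := (abs_integral_sub_integral_clamp_le hY K.cast_nonneg).trans (hYε K)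
    have htri := abs_sub_le (∫ ω, Y ω ∂P) (∫ ω, clamp K (Y ω) ∂P) c
    rw [abs_sub_comm] at hW'
    linarith
  have : |∫ ω, Y ω ∂P - c| ≤ 0 := by
    simpa using ge_of_tendsto' (hε.const_mul 2) hbound
  exact sub_eq_zero.1 (abs_nonpos_iff.1 this)

namespace ConvexOrderLE

lemma integrable (hX : Integrable X P) (h : ConvexOrderLE P Y X) : Integrable Y P :=
  (h id continuous_id (convexOn_id convex_univ) hX).1

lemma integral_eq (hX : Integrable X P) (h : ConvexOrderLE P Y X) :
    ∫ ω, Y ω ∂P = ∫ ω, X ω ∂P := by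
  have hle := (h id continuous_id (convexOn_id convex_univ) hX).2
  have hge := (h (fun x => -x) continuous_neg (concaveOn_id convex_univ).neg hX.neg).2
  rw [integral_neg, integral_neg] at hge
  exact le_antisymm hle (neg_le_neg_iff.1 hge)

lemma of_sum_mul [IsFiniteMeasure P] {ι : Type*} [Fintype ι] {w : ι → ℝ} {Z : ι → Ω → ℝ}
    (hX : Integrable X P) (hw : ∀ i, 0 ≤ w i) (hw1 : ∑ i, w i = 1)
    (hZ : ∀ i, IdentDistrib (Z i) X P P) :
    ConvexOrderLE P (fun ω => ∑ i, w i * Z i ω) X := by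
  intro ψ hψc hψ hψX
  have hψZ : ∀ i, IdentDistrib (fun ω => ψ (Z i ω)) (fun ω => ψ (X ω)) P P :=
    fun i => (hZ i).comp hψc.measurable
  have hψZint : ∀ i, Integrable (fun ω => w i * ψ (Z i ω)) P :=
    fun i => ((hψZ i).integrable_iff.2 hψX).const_mul _
  have hupper : Integrable (fun ω => ∑ i, w i * ψ (Z i ω)) P :=
    integrable_finsetSum _ fun i _ => hψZint i
  have hsum : Integrable (fun ω => ∑ i, w i * Z i ω) P :=
    integrable_finsetSum _ fun i _ => ((hZ i).integrable_iff.2 hX).const_mul _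
  have jensen : ∀ ω, ψ (∑ i, w i * Z i ω) ≤ ∑ i, w i * ψ (Z i ω) := fun ω => by
    simpa only [smul_eq_mul] using hψ.map_sum_le (t := Finset.univ) (p := fun i => Z i ω)
      (fun i _ => hw i) hw1 (fun i _ => mem_univ _)
  obtain ⟨c, c', hcc'⟩ := exists_affine_le_of_convexOn_univ hψc hψ
  have hint : Integrable (fun ω => ψ (∑ i, w i * Z i ω)) P :=
    integrable_of_le_of_le (hψc.comp_aestronglyMeasurable hsum.1)
      (ae_of_all _ fun ω => hcc' _) (ae_of_all _ jensen)
      ((hsum.const_mul c).add (integrable_const c')) hupper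
  refine ⟨hint, (integral_mono hint hupper jensen).trans_eq ?_⟩
  rw [integral_finsetSum _ fun i _ => hψZint i]
  simp_rw [integral_const_mul, (hψZ _).integral_eq, ← Finset.sum_mul, hw1, one_mul]

variable {Yn : ℕ → Ω → ℝ}

lemma integral_le_of_tendsto_ae_of_nonneg (hYn : ∀ n, ConvexOrderLE P (Yn n) X)
    (hlim : ∀ᵐ ω ∂P, Tendsto (fun n => Yn n ω) atTop (𝓝 (Y ω))) {ψ : ℝ → ℝ}
    (hψc : Continuous ψ) (hψ : ConvexOn ℝ univ ψ) (hψ0 : ∀ x, 0 ≤ ψ x)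
    (hψX : Integrable (fun ω => ψ (X ω)) P) :
    Integrable (fun ω => ψ (Y ω)) P ∧ ∫ ω, ψ (Y ω) ∂P ≤ ∫ ω, ψ (X ω) ∂P :=
  integrable_and_integral_le_of_tendsto_ae (fun n => (hYn n ψ hψc hψ hψX).1)
    (fun _ => ae_of_all _ fun _ => hψ0 _) (fun n => (hYn n ψ hψc hψ hψX).2)
    (by filter_upwards [hlim] with ω hω using (hψc.tendsto _).comp hω)

lemma integral_absExcess_le_of_tendsto_ae (hX : Integrable X P)
    (hYn : ∀ n, ConvexOrderLE P (Yn n) X)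
    (hlim : ∀ᵐ ω ∂P, Tendsto (fun n => Yn n ω) atTop (𝓝 (Y ω))) {K : ℝ} (hK : 0 ≤ K) :
    Integrable (fun ω => absExcess K (Y ω)) P ∧
      ∫ ω, absExcess K (Y ω) ∂P ≤ ∫ ω, absExcess K (X ω) ∂P :=
  integral_le_of_tendsto_ae_of_nonneg hYn hlim (continuous_absExcess K) (convexOn_absExcess K)
    (absExcess_nonneg K) (hX.absExcess hK)

lemma integrable_of_tendsto_ae (hX : Integrable X P) (hYn : ∀ n, ConvexOrderLE P (Yn n) X)
    (hlim : ∀ᵐ ω ∂P, Tendsto (fun n => Yn n ω) atTop (𝓝 (Y ω))) : Integrable Y P := by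
  have hY : AEStronglyMeasurable Y P :=
    aestronglyMeasurable_of_tendsto_ae atTop (fun n => ((hYn n).integrable hX).1) hlim
  refine (integrable_norm_iff hY).1 ?_
  simpa [absExcess, Real.norm_eq_abs] using
    (integral_absExcess_le_of_tendsto_ae hX hYn hlim le_rfl).1

lemma integral_eq_of_tendsto_ae [IsFiniteMeasure P] (hX : Integrable X P)
    (hYn : ∀ n, ConvexOrderLE P (Yn n) X)
    (hlim : ∀ᵐ ω ∂P, Tendsto (fun n => Yn n ω) atTop (𝓝 (Y ω))) :
    ∫ ω, Y ω ∂P = ∫ ω, X ω ∂P :=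
  integral_eq_of_tendsto_ae_of_absExcess_le (fun n => (hYn n).integrable hX)
    (fun n => (hYn n).integral_eq hX) (integrable_of_tendsto_ae hX hYn hlim) hlim
    (tendsto_integral_absExcess_atTop hX)
    (fun K n => (hYn n _ (continuous_absExcess K) (convexOn_absExcess K)
      (hX.absExcess K.cast_nonneg)).2)
    (fun K => (integral_absExcess_le_of_tendsto_ae hX hYn hlim K.cast_nonneg).2)

lemma of_tendsto_ae [IsFiniteMeasure P] (hX : Integrable X P)
    (hYn : ∀ n, ConvexOrderLE P (Yn n) X)
    (hlim : ∀ᵐ ω ∂P, Tendsto (fun n => Yn n ω) atTop (𝓝 (Y ω))) :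
    ConvexOrderLE P Y X := by
  intro ψ hψc hψ hψX
  obtain ⟨c, c', hcc'⟩ := exists_affine_le_of_convexOn_univ hψc hψ
  have hY := integrable_of_tendsto_ae hX hYn hlim
  have hℓX : Integrable (fun ω => c * X ω + c') P := (hX.const_mul c).add (integrable_const c')
  have hℓY : Integrable (fun ω => c * Y ω + c') P := (hY.const_mul c).add (integrable_const c')
  obtain ⟨hgY, hle⟩ := integral_le_of_tendsto_ae_of_nonneg hYn hlim
    (ψ := fun x => ψ x - (c * x + c')) (by fun_prop)
    (hψ.sub (((LinearMap.mul ℝ ℝ c).concaveOn convex_univ).add_const c'))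
    (fun x => sub_nonneg.2 (hcc' x)) (hψX.sub hℓX)
  have hψY : Integrable (fun ω => ψ (Y ω)) P :=
    (hgY.add hℓY).congr (ae_of_all _ fun ω => sub_add_cancel _ _)
  refine ⟨hψY, ?_⟩
  rw [integral_sub hψY hℓY, integral_sub hψX hℓX,
    integral_add (hY.const_mul c) (integrable_const c'),
    integral_add (hX.const_mul c) (integrable_const c'), integral_const_mul, integral_const_mul,
    integral_eq_of_tendsto_ae hX hYn hlim] at hle
  linarith

lemma of_tendstoInMeasure [IsFiniteMeasure P] (hX : Integrable X P)
    (hYn : ∀ n, ConvexOrderLE P (Yn n) X) (hlim : TendstoInMeasure P Yn atTop Y) :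
    ConvexOrderLE P Y X :=
  let ⟨_, _, hae⟩ := hlim.exists_seq_tendsto_ae
  of_tendsto_ae hX (fun _ => hYn _) hae

end ConvexOrderLE

end

theorem stmt_0_general {Ω : Type*} [MeasurableSpace Ω] (P : Measure Ω) [IsProbabilityMeasure P]
    (X : Ω → ℝ) (hXint : Integrable X P)
    (Y : Ω → ℝ) (Yn : ℕ → Ω → ℝ)
    (hcomb : ∀ n, ∃ (k : ℕ) (lam : Fin k → ℝ) (Z : Fin k → Ω → ℝ),
      0 < k ∧ (∀ i, 0 ≤ lam i) ∧ (∑ i, lam i) = 1 ∧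
      (∀ i, IdentDistrib (Z i) X P P) ∧
      Yn n = fun ω => ∑ i, lam i * Z i ω)
    (hlim : TendstoInMeasure P Yn atTop Y)
    (φ : ℝ → ℝ) (hφc : Continuous φ) (hφconv : ConvexOn ℝ univ φ)
    (hintX : Integrable (fun ω => φ (X ω)) P) :
    ∫ ω, φ (Y ω) ∂P ≤ ∫ ω, φ (X ω) ∂P := by
  have hYn : ∀ n, ConvexOrderLE P (Yn n) X := fun n => by
    obtain ⟨k, lam, Z, -, hlam, hsum, hZ, hYn⟩ := hcomb n
    exact hYn ▸ ConvexOrderLE.of_sum_mul hXint hlam hsum hZ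
  exact (ConvexOrderLE.of_tendstoInMeasure hXint hYn hlim φ hφc hφconv hintX).2

/-- Every element of the closure in probability of the convex hull of `F`-distributed
random variables is dominated in convex order by `F` (represented by a random variable `X`). -/
theorem stmt_0 {Ω : Type*} [MeasurableSpace Ω] (P : Measure Ω) [IsProbabilityMeasure P]
    (hatomless : ∀ s, MeasurableSet s → P s ≠ 0 → ∃ t ⊆ s, MeasurableSet t ∧ 0 < P t ∧ P t < P s)
    (X : Ω → ℝ) (hXint : Integrable X P)
    (m : ℝ) (hsupp : ∀ᵐ ω ∂P, m ≤ X ω)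
    (Y : Ω → ℝ) (Yn : ℕ → Ω → ℝ)
    (hcomb : ∀ n, ∃ (k : ℕ) (lam : Fin k → ℝ) (Z : Fin k → Ω → ℝ),
      0 < k ∧ (∀ i, 0 ≤ lam i) ∧ (∑ i, lam i) = 1 ∧
      (∀ i, IdentDistrib (Z i) X P P) ∧
      Yn n = fun ω => ∑ i, lam i * Z i ω)
    (hlim : TendstoInMeasure P Yn atTop Y)
    (φ : ℝ → ℝ) (hφc : Continuous φ) (hφconv : ConvexOn ℝ univ φ)
    (hintY : Integrable (fun ω => φ (Y ω)) P)
    (hintX : Integrable (fun ω => φ (X ω)) P)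
    (hintYn : ∀ n, Integrable (fun ω => φ (Yn n ω)) P) :
    ∫ ω, φ (Y ω) ∂P ≤ ∫ ω, φ (X ω) ∂P :=
  stmt_0_general P X hXint Y Yn hcomb hlim φ hφc hφconv hintX
end

section
/- A preference functional V defined on a subset D of L¹, which is upper semicontinuous (with respect to convergence in probability) and consistent with convex order (meaning Y ⪯_cx X implies V(X) ≤ V(Y)), is both law-invariant (X and Y equal in distribution implies V(X) = V(Y)) and diversification-loving. -/
open MeasureTheory ProbabilityTheory Filter Set

private lemma convexOn_univ_continuous (φ : ℝ → ℝ) (h : ConvexOn ℝ univ φ) : Continuous φ := by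
  have := h.continuousOn isOpen_univ
  exact continuousOn_univ.mp this

/-- An upper semicontinuous (w.r.t. convergence in probability) preference functional
`V : D → ℝ ∪ {−∞}` that is consistent with convex order is law-invariant and
diversification-loving. -/
theorem stmt_1 {Ω : Type*} [MeasurableSpace Ω] (P : Measure Ω) [IsProbabilityMeasure P]
    (D : Set (Ω → ℝ)) (hD : ∀ X ∈ D, Integrable X P)
    (V : (Ω → ℝ) → EReal)
    -- upper semicontinuity with respect to convergence in probability
    (husc : ∀ (Xn : ℕ → Ω → ℝ) (X : Ω → ℝ), (∀ n, Xn n ∈ D) → X ∈ D →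
      TendstoInMeasure P Xn atTop X → limsup (fun n => V (Xn n)) atTop ≤ V X)
    -- consistency with convex order: Y ⪯_cx X implies V X ≤ V Y
    (hcx : ∀ X ∈ D, ∀ Y ∈ D,
      (∀ φ : ℝ → ℝ, ConvexOn ℝ univ φ →
        Integrable (fun ω => φ (Y ω)) P → Integrable (fun ω => φ (X ω)) P →
        ∫ ω, φ (Y ω) ∂P ≤ ∫ ω, φ (X ω) ∂P) →
      V X ≤ V Y) :
    -- law-invariance
    ((∀ X ∈ D, ∀ Y ∈ D, IdentDistrib X Y P P → V X = V Y) ∧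
    -- diversification-loving
    (∀ (n : ℕ) (X : Fin n → Ω → ℝ), 0 < n → (∀ i, X i ∈ D) →
      (∀ i j, IdentDistrib (X i) (X j) P P) →
      ∀ (lam : Fin n → ℝ), (∀ i, 0 ≤ lam i) → (∑ i, lam i) = 1 →
      (fun ω => ∑ i, lam i * X i ω) ∈ D →
      ∀ j, V (X j) ≤ V (fun ω => ∑ i, lam i * X i ω))) := by
  constructor
  · intro X hX Y hY hXY
    have key : ∀ (X Y : Ω → ℝ), IdentDistrib X Y P P →
        (∀ φ : ℝ → ℝ, ConvexOn ℝ univ φ →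
          Integrable (fun ω => φ (Y ω)) P → Integrable (fun ω => φ (X ω)) P →
          ∫ ω, φ (Y ω) ∂P ≤ ∫ ω, φ (X ω) ∂P) := by
      intro X Y h φ hφ _ _
      have := (h.comp (convexOn_univ_continuous φ hφ).measurable).integral_eq
      exact le_of_eq this.symm
    exact le_antisymm (hcx X hX Y hY (key X Y hXY)) (hcx Y hY X hX (key Y X hXY.symm))
  · intro n X hn hXD hid lam hlam hsum hSD j
    set S : Ω → ℝ := fun ω => ∑ i, lam i * X i ω with hS
    apply hcx (X j) (hXD j) S hSD
    intro φ hφ hintS hintj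
    have hcont := convexOn_univ_continuous φ hφ
    have hidφ : ∀ i, IdentDistrib (fun ω => φ (X i ω)) (fun ω => φ (X j ω)) P P :=
      fun i => (hid i j).comp hcont.measurable
    have hinti : ∀ i, Integrable (fun ω => φ (X i ω)) P :=
      fun i => (hidφ i).integrable_iff.mpr hintj
    have hpt : ∀ ω, φ (S ω) ≤ ∑ i, lam i * φ (X i ω) := by
      intro ω
      have := hφ.map_sum_le (t := Finset.univ) (w := lam) (p := fun i => X i ω)
        (fun i _ => hlam i) hsum (fun i _ => mem_univ _)
      simpa using this
    have hintsum : Integrable (fun ω => ∑ i, lam i * φ (X i ω)) P :=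
      integrable_finset_sum _ (fun i _ => (hinti i).const_mul _)
    calc ∫ ω, φ (S ω) ∂P ≤ ∫ ω, ∑ i, lam i * φ (X i ω) ∂P :=
          integral_mono hintS hintsum hpt
      _ = ∑ i, lam i * ∫ ω, φ (X i ω) ∂P := by
          rw [integral_finset_sum _ (fun i _ => (hinti i).const_mul _)]
          simp_rw [integral_const_mul]
      _ = ∑ i, lam i * ∫ ω, φ (X j ω) ∂P := by
          refine Finset.sum_congr rfl fun i _ => ?_
          rw [(hidφ i).integral_eq]
      _ = ∫ ω, φ (X j ω) ∂P := by
          rw [← Finset.sum_mul, hsum, one_mul]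
end

section
/- If X₁,…,Xₙ are identically distributed integrable random variables and λ₁,…,λₙ are nonnegative weights summing to 1, then the convex combination Σᵢ λᵢ Xᵢ is smaller than X_j in convex order, for every j. -/
open MeasureTheory ProbabilityTheory Set

theorem ConvexOn.integral_comp_sum_mul_le {Ω ι : Type*} [MeasurableSpace Ω] {P : Measure Ω}
    [Fintype ι] {φ : ℝ → ℝ} (hφ : ConvexOn ℝ univ φ) {X : ι → Ω → ℝ} {lam : ι → ℝ}
    (hlam : ∀ i, 0 ≤ lam i) (hsum : ∑ i, lam i = 1)
    (hint_sum : Integrable (fun ω => φ (∑ i, lam i * X i ω)) P)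
    (hint : ∀ i, Integrable (fun ω => φ (X i ω)) P) :
    ∫ ω, φ (∑ i, lam i * X i ω) ∂P ≤ ∑ i, lam i * ∫ ω, φ (X i ω) ∂P := by
  have hjensen : ∀ ω, φ (∑ i, lam i * X i ω) ≤ ∑ i, lam i * φ (X i ω) := fun ω => by
    simpa only [smul_eq_mul] using
      hφ.map_sum_le (fun i _ => hlam i) hsum fun i _ => mem_univ (X i ω)
  calc ∫ ω, φ (∑ i, lam i * X i ω) ∂P
      ≤ ∫ ω, ∑ i, lam i * φ (X i ω) ∂P :=
        integral_mono hint_sum (integrable_finsetSum _ fun i _ => (hint i).const_mul _) hjensen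
    _ = ∑ i, lam i * ∫ ω, φ (X i ω) ∂P := by
        rw [integral_finsetSum _ fun i _ => (hint i).const_mul _]
        simp only [integral_const_mul]

theorem stmt_2_general {Ω : Type*} [MeasurableSpace Ω] (P : Measure Ω)
    (n : ℕ) (X : Fin n → Ω → ℝ)
    (hid : ∀ i j, IdentDistrib (X i) (X j) P P)
    (lam : Fin n → ℝ) (hlam : ∀ i, 0 ≤ lam i) (hsum : (∑ i, lam i) = 1)
    (j : Fin n) :
    ∀ φ : ℝ → ℝ, ConvexOn ℝ univ φ →
      Integrable (fun ω => φ (∑ i, lam i * X i ω)) P →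
      Integrable (fun ω => φ (X j ω)) P →
      ∫ ω, φ (∑ i, lam i * X i ω) ∂P ≤ ∫ ω, φ (X j ω) ∂P := by
  intro φ hφ hint_sum hint_j
  have hφ_meas : Measurable φ := (continuousOn_univ.mp (hφ.continuousOn isOpen_univ)).measurable
  have hid_φ : ∀ i, IdentDistrib (fun ω => φ (X i ω)) (fun ω => φ (X j ω)) P P :=
    fun i => (hid i j).comp hφ_meas
  calc ∫ ω, φ (∑ i, lam i * X i ω) ∂P
      ≤ ∑ i, lam i * ∫ ω, φ (X i ω) ∂P :=
        hφ.integral_comp_sum_mul_le hlam hsum hint_sum fun i => (hid_φ i).integrable_iff.mpr hint_j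
    _ = ∫ ω, φ (X j ω) ∂P := by
        simp only [fun i => (hid_φ i).integral_eq, ← Finset.sum_mul, hsum, one_mul]

/-- A convex combination of identically distributed integrable random variables is smaller
in convex order than each of them. -/
theorem stmt_2 {Ω : Type*} [MeasurableSpace Ω] (P : Measure Ω) [IsProbabilityMeasure P]
    (n : ℕ) (X : Fin n → Ω → ℝ) (hint : ∀ i, Integrable (X i) P)
    (hid : ∀ i j, IdentDistrib (X i) (X j) P P)
    (lam : Fin n → ℝ) (hlam : ∀ i, 0 ≤ lam i) (hsum : (∑ i, lam i) = 1)
    (j : Fin n) :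
    ∀ φ : ℝ → ℝ, ConvexOn ℝ univ φ →
      Integrable (fun ω => φ (∑ i, lam i * X i ω)) P →
      Integrable (fun ω => φ (X j ω)) P →
      ∫ ω, φ (∑ i, lam i * X i ω) ∂P ≤ ∫ ω, φ (X j ω) ∂P :=
  stmt_2_general P n X hid lam hlam hsum j
end

section
/- An upper semicontinuous (with respect to convergence in probability) preference functional V that is diversification-loving and law-invariant is consistent with convex order: if Y ⪯_cx X, then V(X) ≤ V(Y). -/
open MeasureTheory ProbabilityTheory Filter Set

/-- An upper semicontinuous (w.r.t. convergence in probability), diversification-loving and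
law-invariant preference functional on a Schur-convex domain `D ⊆ L¹` is consistent with
convex order. -/
theorem stmt_3 {Ω : Type*} [MeasurableSpace Ω] (P : Measure Ω) [IsProbabilityMeasure P]
    (D : Set (Ω → ℝ)) (hDint : ∀ X ∈ D, Integrable X P)
    -- Schur-convexity of the domain: closed under convex-order domination
    (hSchur : ∀ X ∈ D, ∀ Y : Ω → ℝ, Integrable Y P →
      (∀ φ : ℝ → ℝ, ConvexOn ℝ univ φ →
        Integrable (fun ω => φ (Y ω)) P → Integrable (fun ω => φ (X ω)) P →
        ∫ ω, φ (Y ω) ∂P ≤ ∫ ω, φ (X ω) ∂P) → Y ∈ D)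
    (V : (Ω → ℝ) → EReal)
    -- upper semicontinuity w.r.t. convergence in probability
    (husc : ∀ (Xn : ℕ → Ω → ℝ) (X : Ω → ℝ), (∀ n, Xn n ∈ D) → X ∈ D →
      TendstoInMeasure P Xn atTop X → limsup (fun n => V (Xn n)) atTop ≤ V X)
    -- diversification-loving
    (hdiv : ∀ (n : ℕ) (Z : Fin n → Ω → ℝ), 0 < n → (∀ i, Z i ∈ D) →
      (∀ i j, IdentDistrib (Z i) (Z j) P P) →
      ∀ (lam : Fin n → ℝ), (∀ i, 0 ≤ lam i) → (∑ i, lam i) = 1 →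
      (fun ω => ∑ i, lam i * Z i ω) ∈ D →
      ∀ j, V (Z j) ≤ V (fun ω => ∑ i, lam i * Z i ω))
    -- law-invariance
    (hli : ∀ X ∈ D, ∀ Y ∈ D, IdentDistrib X Y P P → V X = V Y)
    -- approximation fact: any Y ⪯_cx X is a limit in probability of convex combinations
    -- of X-distributed random variables from D
    (happrox : ∀ X ∈ D, ∀ Y ∈ D,
      (∀ φ : ℝ → ℝ, ConvexOn ℝ univ φ →
        Integrable (fun ω => φ (Y ω)) P → Integrable (fun ω => φ (X ω)) P →
        ∫ ω, φ (Y ω) ∂P ≤ ∫ ω, φ (X ω) ∂P) →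
      ∃ Yn : ℕ → Ω → ℝ,
        (∀ n, ∃ (k : ℕ) (lam : Fin k → ℝ) (Z : Fin k → Ω → ℝ),
          0 < k ∧ (∀ i, 0 ≤ lam i) ∧ (∑ i, lam i) = 1 ∧
          (∀ i, Z i ∈ D) ∧ (∀ i, IdentDistrib (Z i) X P P) ∧
          Yn n = fun ω => ∑ i, lam i * Z i ω) ∧
        (∀ n, Yn n ∈ D) ∧ TendstoInMeasure P Yn atTop Y) :
    -- conclusion: V is consistent with convex order
    ∀ X ∈ D, ∀ Y ∈ D,
      (∀ φ : ℝ → ℝ, ConvexOn ℝ univ φ →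
        Integrable (fun ω => φ (Y ω)) P → Integrable (fun ω => φ (X ω)) P →
        ∫ ω, φ (Y ω) ∂P ≤ ∫ ω, φ (X ω) ∂P) →
      V X ≤ V Y := by
  intro X hX Y hY hcx
  obtain ⟨Yn, hrep, hYnD, hYnlim⟩ := happrox X hX Y hY hcx
  have hstep : ∀ n, V X ≤ V (Yn n) := by
    intro n
    obtain ⟨k, lam, Z, hk, hlam0, hlam1, hZD, hZid, hYn⟩ := hrep n
    have hid : ∀ i j, IdentDistrib (Z i) (Z j) P P := fun i j =>
      (hZid i).trans (hZid j).symm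
    have hmem : (fun ω => ∑ i, lam i * Z i ω) ∈ D := hYn ▸ hYnD n
    have h := hdiv k Z hk hZD hid lam hlam0 hlam1 hmem ⟨0, hk⟩
    have hVX : V X = V (Z ⟨0, hk⟩) :=
      hli X hX (Z ⟨0, hk⟩) (hZD _) (hZid _).symm
    rw [hYn, hVX]
    exact h
  have h1 : V X ≤ limsup (fun n => V (Yn n)) atTop :=
    le_limsup_of_frequently_le (Frequently.of_forall hstep)
  exact h1.trans (husc Yn Y hYnD hY hYnlim)
end

section
/- (Fréchet–Hoeffding lower bound) For any two nonnegative random variables ξ and Y with cdfs F_ξ and F_Y, and any uniform(0,1) random variable U, one has E[F_ξ^{-1}(U) F_Y^{-1}(1−U)] ≤ E[ξY]. -/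
open MeasureTheory ProbabilityTheory Set

open scoped Topology

/-! Since `ab` is the area of `(0,a) × (0,b)` for `a ≥ 0`, Tonelli gives
`E[XY] = ∫∫_{s,t>0} P(X > s, Y > t) ds dt` for `X ≥ 0`. For the countermonotone pair
`F⁻¹(U), G⁻¹(1-U)` the event `{F⁻¹(U) > s, G⁻¹(1-U) > t}` forces `F(s) < U < 1 - G(t)`, so its
probability is at most `(1 - F(s) - G(t))⁺`, and this is the Fréchet lower bound for
`P(ξ > s, Y > t)`. -/

/-- The cumulative distribution function of a random variable. -/
noncomputable def cdfOf {Ω : Type*} [MeasurableSpace Ω] (P : Measure Ω) (X : Ω → ℝ) :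
    ℝ → ℝ := fun x => (P {ω | X ω ≤ x}).toReal

/-- The left-continuous generalized inverse (quantile function) of a cdf. -/
noncomputable def quantileOf (F : ℝ → ℝ) (p : ℝ) : ℝ := sInf {x : ℝ | p ≤ F x}

section Quantile

variable {F : ℝ → ℝ} {u s : ℝ}

-- `0 ≤ s` covers the junk value `sInf = 0` when `{x | u ≤ F x}` is not bounded below.
theorem quantileOf_le (hs : 0 ≤ s) (h : u ≤ F s) : quantileOf F u ≤ s := by
  by_cases hbdd : BddBelow {x : ℝ | u ≤ F x}
  · exact csInf_le hbdd h
  · rw [quantileOf, Real.sInf_of_not_bddBelow hbdd]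
    exact hs

theorem lt_of_lt_quantileOf (hs : 0 ≤ s) (h : s < quantileOf F u) : F s < u :=
  lt_of_not_ge fun h' => (quantileOf_le hs h').not_gt h

theorem zero_mem_lowerBounds_setOf_le (hF : ∀ x < 0, F x = 0) (hu : 0 < u) :
    0 ∈ lowerBounds {x : ℝ | u ≤ F x} :=
  fun x hx => le_of_not_gt fun hx0 => (hF x hx0 ▸ hx : u ≤ 0).not_gt hu

theorem quantileOf_nonneg (hF : ∀ x < 0, F x = 0) (hu : 0 < u) : 0 ≤ quantileOf F u :=
  Real.sInf_nonneg (zero_mem_lowerBounds_setOf_le hF hu)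

theorem monotoneOn_quantileOf (hF : ∀ x < 0, F x = 0) (hF1 : Filter.Tendsto F Filter.atTop (𝓝 1)) :
    MonotoneOn (quantileOf F) (Ioo 0 1) := by
  intro u hu v hv huv
  obtain ⟨x, hx⟩ := (hF1.eventually (eventually_ge_nhds hv.2)).exists
  exact csInf_le_csInf ⟨0, zero_mem_lowerBounds_setOf_le hF hu.1⟩ ⟨x, hx⟩
    fun x (hx : v ≤ F x) => huv.trans hx

end Quantile

section CdfOf

variable {Ω : Type*} [MeasurableSpace Ω] {P : Measure Ω} {ξ Y : Ω → ℝ}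

theorem cdfOf_of_neg (hξ : ∀ ω, 0 ≤ ξ ω) {x : ℝ} (hx : x < 0) : cdfOf P ξ x = 0 := by
  have : {ω | ξ ω ≤ x} = ∅ := eq_empty_of_forall_notMem fun ω hω => (hx.trans_le (hξ ω)).not_ge hω
  simp [cdfOf, this]

theorem tendsto_cdfOf_atTop [IsProbabilityMeasure P] :
    Filter.Tendsto (cdfOf P ξ) Filter.atTop (𝓝 1) := by
  have hmono : Monotone fun x : ℝ => {ω | ξ ω ≤ x} := fun x y hxy ω (hω : ξ ω ≤ x) => hω.trans hxy
  have hunion : ⋃ x : ℝ, {ω | ξ ω ≤ x} = univ :=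
    eq_univ_of_forall fun ω => mem_iUnion.2 ⟨ξ ω, le_refl (ξ ω)⟩
  have h := tendsto_measure_iUnion_atTop (μ := P) hmono
  rw [hunion, measure_univ] at h
  exact (ENNReal.tendsto_toReal ENNReal.one_ne_top).comp h

theorem one_sub_cdfOf_sub_cdfOf_le_measureReal [IsProbabilityMeasure P] (s t : ℝ) :
    1 - cdfOf P ξ s - cdfOf P Y t ≤ P.real {ω | s < ξ ω ∧ t < Y ω} := by
  have hcompl : {ω | s < ξ ω ∧ t < Y ω}ᶜ = {ω | ξ ω ≤ s} ∪ {ω | Y ω ≤ t} := by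
    ext ω; simp only [mem_compl_iff, mem_ofPred_eq, mem_union, not_and_or, not_lt]
  have h : P univ ≤ P {ω | s < ξ ω ∧ t < Y ω} + (P {ω | ξ ω ≤ s} + P {ω | Y ω ≤ t}) :=
    calc P univ ≤ P {ω | s < ξ ω ∧ t < Y ω} + P {ω | s < ξ ω ∧ t < Y ω}ᶜ :=
          measure_univ_le_add_compl _
      _ ≤ _ := by rw [hcompl]; gcongr; exact measure_union_le _ _
  have hreal := ENNReal.toReal_mono (by finiteness) h
  rw [ENNReal.toReal_add (by finiteness) (by finiteness),
    ENNReal.toReal_add (by finiteness) (by finiteness)] at hreal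
  simp only [measure_univ, ENNReal.toReal_one] at hreal
  rw [cdfOf, cdfOf, measureReal_def]
  linarith

end CdfOf

section LayerCake

variable {Ω : Type*} [MeasurableSpace Ω] {μ : Measure Ω} [SFinite μ] {f g : Ω → ℝ}

theorem lintegral_ofReal_mul_eq_lintegral_measure_of_measurable (hf : Measurable f)
    (hg : Measurable g) (hf0 : 0 ≤ᵐ[μ] f) :
    ∫⁻ ω, ENNReal.ofReal (f ω * g ω) ∂μ
      = ∫⁻ p : ℝ × ℝ, μ {ω | p ∈ Ioo 0 (f ω) ×ˢ Ioo 0 (g ω)} := by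
  set S : Set (Ω × (ℝ × ℝ)) := {x | x.2 ∈ Ioo 0 (f x.1) ×ˢ Ioo 0 (g x.1)}
  have hS : MeasurableSet S := by
    simp only [S, mem_prod, mem_Ioo, ofPred_and]
    refine ((measurableSet_lt ?_ ?_).inter (measurableSet_lt ?_ ?_)).inter
      ((measurableSet_lt ?_ ?_).inter (measurableSet_lt ?_ ?_)) <;> fun_prop
  calc ∫⁻ ω, ENNReal.ofReal (f ω * g ω) ∂μ
      = ∫⁻ ω, volume (Prod.mk ω ⁻¹' S) ∂μ := by
        refine lintegral_congr_ae (hf0.mono fun ω (hω : 0 ≤ f ω) => ?_)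
        dsimp only
        rw [show Prod.mk ω ⁻¹' S = Ioo 0 (f ω) ×ˢ Ioo 0 (g ω) from rfl, Measure.volume_eq_prod,
          Measure.prod_prod, Real.volume_Ioo, Real.volume_Ioo, sub_zero, sub_zero,
          ENNReal.ofReal_mul hω]
    _ = μ.prod volume S := (Measure.prod_apply hS).symm
    _ = ∫⁻ p : ℝ × ℝ, μ {ω | p ∈ Ioo 0 (f ω) ×ˢ Ioo 0 (g ω)} := Measure.prod_apply_symm hS

theorem lintegral_ofReal_mul_eq_lintegral_measure (hf : AEMeasurable f μ)
    (hg : AEMeasurable g μ) (hf0 : 0 ≤ᵐ[μ] f) :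
    ∫⁻ ω, ENNReal.ofReal (f ω * g ω) ∂μ
      = ∫⁻ p : ℝ × ℝ, μ {ω | p ∈ Ioo 0 (f ω) ×ˢ Ioo 0 (g ω)} := by
  have hfg := hf.ae_eq_mk.and hg.ae_eq_mk
  calc ∫⁻ ω, ENNReal.ofReal (f ω * g ω) ∂μ
      = ∫⁻ ω, ENNReal.ofReal (hf.mk f ω * hg.mk g ω) ∂μ :=
        lintegral_congr_ae (hfg.mono fun ω h => by dsimp only; rw [h.1, h.2])
    _ = ∫⁻ p : ℝ × ℝ, μ {ω | p ∈ Ioo 0 (hf.mk f ω) ×ˢ Ioo 0 (hg.mk g ω)} :=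
        lintegral_ofReal_mul_eq_lintegral_measure_of_measurable hf.measurable_mk
          hg.measurable_mk (hf0.trans hf.ae_eq_mk.le)
    _ = ∫⁻ p : ℝ × ℝ, μ {ω | p ∈ Ioo 0 (f ω) ×ˢ Ioo 0 (g ω)} :=
        lintegral_congr fun p => measure_congr <| Filter.eventuallyEq_set.2 <|
          hfg.mono fun ω h => by simp only [mem_ofPred_eq, h.1, h.2]

end LayerCake

section Coupling

variable {Ω : Type*} [MeasurableSpace Ω] {P : Measure Ω} {U : Ω → ℝ}

theorem aemeasurable_of_map_eq_uniform
    (hU : P.map U = volume.restrict (Ioo (0 : ℝ) 1)) : AEMeasurable U P :=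
  .of_map_ne_zero (by simp [hU, Measure.restrict_eq_zero])

theorem measure_lt_quantileOf_lt_quantileOf_le (F G : ℝ → ℝ)
    (hU : P.map U = volume.restrict (Ioo (0 : ℝ) 1)) {s t : ℝ} (hs : 0 ≤ s) (ht : 0 ≤ t) :
    P {ω | s < quantileOf F (U ω) ∧ t < quantileOf G (1 - U ω)}
      ≤ ENNReal.ofReal (1 - F s - G t) :=
  calc P {ω | s < quantileOf F (U ω) ∧ t < quantileOf G (1 - U ω)}
      ≤ P (U ⁻¹' Ioo (F s) (1 - G t)) := measure_mono fun ω ⟨h₁, h₂⟩ =>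
        ⟨lt_of_lt_quantileOf hs h₁, by linarith [lt_of_lt_quantileOf ht h₂]⟩
    _ = volume.restrict (Ioo (0 : ℝ) 1) (Ioo (F s) (1 - G t)) := by
        rw [← hU, Measure.map_apply_of_aemeasurable (aemeasurable_of_map_eq_uniform hU)
          measurableSet_Ioo]
    _ ≤ volume (Ioo (F s) (1 - G t)) := Measure.restrict_apply_le _ _
    _ = ENNReal.ofReal (1 - F s - G t) := by rw [Real.volume_Ioo, sub_right_comm]

variable {F : ℝ → ℝ} (hF : ∀ x < 0, F x = 0) (hF1 : Filter.Tendsto F Filter.atTop (𝓝 1))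
  (hU : P.map U = volume.restrict (Ioo (0 : ℝ) 1))
include hF hF1 hU

theorem aemeasurable_quantileOf_comp : AEMeasurable (fun ω => quantileOf F (U ω)) P := by
  have h := aemeasurable_restrict_of_monotoneOn (μ := volume) measurableSet_Ioo
    (monotoneOn_quantileOf hF hF1)
  rw [← hU] at h
  exact h.comp_aemeasurable (aemeasurable_of_map_eq_uniform hU)

theorem aemeasurable_quantileOf_one_sub_comp :
    AEMeasurable (fun ω => quantileOf F (1 - U ω)) P := by
  have hanti : AntitoneOn (fun u => quantileOf F (1 - u)) (Ioo 0 1) := fun u hu v hv huv =>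
    monotoneOn_quantileOf hF hF1 ⟨by linarith [hv.2], by linarith [hv.1]⟩
      ⟨by linarith [hu.2], by linarith [hu.1]⟩ (by linarith)
  have h := aemeasurable_restrict_of_antitoneOn (μ := volume) measurableSet_Ioo hanti
  rw [← hU] at h
  exact h.comp_aemeasurable (aemeasurable_of_map_eq_uniform hU)

end Coupling

theorem measure_mem_Ioo_prod_quantileOf_le {Ω : Type*} [MeasurableSpace Ω] {P : Measure Ω}
    [IsProbabilityMeasure P] {ξ Y U : Ω → ℝ} (hU : P.map U = volume.restrict (Ioo (0 : ℝ) 1))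
    (s t : ℝ) :
    P {ω | (s, t) ∈ Ioo 0 (quantileOf (cdfOf P ξ) (U ω))
        ×ˢ Ioo 0 (quantileOf (cdfOf P Y) (1 - U ω))}
      ≤ P {ω | (s, t) ∈ Ioo 0 (ξ ω) ×ˢ Ioo 0 (Y ω)} := by
  by_cases hst : 0 < s ∧ 0 < t
  · calc P {ω | (s, t) ∈ Ioo 0 (quantileOf (cdfOf P ξ) (U ω))
            ×ˢ Ioo 0 (quantileOf (cdfOf P Y) (1 - U ω))}
        ≤ P {ω | s < quantileOf (cdfOf P ξ) (U ω) ∧ t < quantileOf (cdfOf P Y) (1 - U ω)} :=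
          measure_mono fun ω h => ⟨h.1.2, h.2.2⟩
      _ ≤ ENNReal.ofReal (1 - cdfOf P ξ s - cdfOf P Y t) :=
          measure_lt_quantileOf_lt_quantileOf_le _ _ hU hst.1.le hst.2.le
      _ ≤ P {ω | s < ξ ω ∧ t < Y ω} :=
          ENNReal.ofReal_le_of_le_toReal (one_sub_cdfOf_sub_cdfOf_le_measureReal s t)
      _ = P {ω | (s, t) ∈ Ioo 0 (ξ ω) ×ˢ Ioo 0 (Y ω)} := by
          congr 1; ext ω; simp [hst.1, hst.2]
  · have hempty : {ω | (s, t) ∈ Ioo 0 (quantileOf (cdfOf P ξ) (U ω))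
        ×ˢ Ioo 0 (quantileOf (cdfOf P Y) (1 - U ω))} = ∅ :=
      eq_empty_of_forall_notMem fun _ hω => hst ⟨hω.1.1, hω.2.1⟩
    rw [hempty, measure_empty]
    exact zero_le

theorem stmt_7_general {Ω : Type*} [MeasurableSpace Ω] (P : Measure Ω) [IsProbabilityMeasure P]
    (ξ Y U : Ω → ℝ) (hξm : Measurable ξ) (hYm : Measurable Y)
    (hξnn : ∀ ω, 0 ≤ ξ ω) (hYnn : ∀ ω, 0 ≤ Y ω)
    (hU : Measure.map U P = (MeasureTheory.volume.restrict (Set.Ioo (0:ℝ) 1))) :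
    ∫⁻ ω, ENNReal.ofReal
        (quantileOf (cdfOf P ξ) (U ω) * quantileOf (cdfOf P Y) (1 - U ω)) ∂P
      ≤ ∫⁻ ω, ENNReal.ofReal (ξ ω * Y ω) ∂P := by
  have hF : ∀ x < 0, cdfOf P ξ x = 0 := fun _ => cdfOf_of_neg hξnn
  have hG : ∀ x < 0, cdfOf P Y x = 0 := fun _ => cdfOf_of_neg hYnn
  have hUae : ∀ᵐ ω ∂P, U ω ∈ Ioo 0 1 := ae_of_ae_map (aemeasurable_of_map_eq_uniform hU)
    (hU ▸ ae_restrict_mem measurableSet_Ioo)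
  rw [lintegral_ofReal_mul_eq_lintegral_measure
      (aemeasurable_quantileOf_comp hF tendsto_cdfOf_atTop hU)
      (aemeasurable_quantileOf_one_sub_comp hG tendsto_cdfOf_atTop hU)
      (hUae.mono fun ω hω => quantileOf_nonneg hF hω.1),
    lintegral_ofReal_mul_eq_lintegral_measure hξm.aemeasurable hYm.aemeasurable
      (ae_of_all _ hξnn)]
  exact lintegral_mono fun p => measure_mem_Ioo_prod_quantileOf_le hU p.1 p.2

/-- Fréchet–Hoeffding lower bound: for nonnegative random variables `ξ` and `Y` and a
uniform(0,1) random variable `U`, `E[F_ξ⁻¹(U) · F_Y⁻¹(1−U)] ≤ E[ξY]` (expectations in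
`[0,∞]`). -/
theorem stmt_7 {Ω : Type*} [MeasurableSpace Ω] (P : Measure Ω) [IsProbabilityMeasure P]
    (ξ Y U : Ω → ℝ) (hξm : Measurable ξ) (hYm : Measurable Y) (hUm : Measurable U)
    (hξnn : ∀ ω, 0 ≤ ξ ω) (hYnn : ∀ ω, 0 ≤ Y ω)
    (hU : Measure.map U P = (MeasureTheory.volume.restrict (Set.Ioo (0:ℝ) 1))) :
    ∫⁻ ω, ENNReal.ofReal
        (quantileOf (cdfOf P ξ) (U ω) * quantileOf (cdfOf P Y) (1 - U ω)) ∂P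
      ≤ ∫⁻ ω, ENNReal.ofReal (ξ ω * Y ω) ∂P :=
  stmt_7_general P ξ Y U hξm hYm hξnn hYnn hU
end

section
/- If ξ has an arbitrary cdf and U is an independent uniform(0,1) random variable, then the distributional transform F̂_ξ(ξ; U) := P[ξ < x]|_{x=ξ} + U·P[ξ = x]|_{x=ξ} is uniformly distributed on (0,1). -/
/-!
Write `D(x, u) = ν(-∞, x) + u ν{x}` for the law `ν` of `ξ`. On `ℝ × [0, 1]`, `D` is monotone for
the lexicographic order, and `D(x, u)` is the `ν ⊗ Unif(0, 1)`-measure of the lexicographic lower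
set below `(x, u)`. Every `t ∈ (0, 1)` is a value `D(x, u)` (take `x` a `t`-quantile of `ν`), so the
law `μ` of `D(ξ, U)` satisfies `μ(-∞, t) ≤ t ≤ μ(-∞, t]` on `(0, 1)`, which forces `μ` to be uniform.
-/

open MeasureTheory ProbabilityTheory Set Filter

namespace ProbabilityTheory

noncomputable def distributionalTransform (ν : Measure ℝ) (x u : ℝ) : ℝ :=
  ν.real (Iio x) + u * ν.real {x}

instance isProbabilityMeasure_volume_restrict_Ioo_zero_one :
    IsProbabilityMeasure (volume.restrict (Ioo (0 : ℝ) 1)) :=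
  ⟨by simp⟩

lemma volume_restrict_Ioo_zero_one_Iic (t : ℝ) :
    volume.restrict (Ioo (0 : ℝ) 1) (Iic t) = ENNReal.ofReal (min 1 t) := by
  rw [Measure.restrict_congr_set Ioo_ae_eq_Ioc, Measure.restrict_apply measurableSet_Iic,
    inter_comm, Ioc_inter_Iic, Real.volume_Ioc, sub_zero]

lemma measureReal_volume_restrict_Ioo_zero_one_Iic {u : ℝ} (hu : u ∈ Icc (0 : ℝ) 1) :
    (volume.restrict (Ioo (0 : ℝ) 1)).real (Iic u) = u := by
  rw [measureReal_def, volume_restrict_Ioo_zero_one_Iic, min_eq_right hu.2,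
    ENNReal.toReal_ofReal hu.1]

lemma measureReal_volume_restrict_Ioo_zero_one_Iio {u : ℝ} (hu : u ∈ Icc (0 : ℝ) 1) :
    (volume.restrict (Ioo (0 : ℝ) 1)).real (Iio u) = u := by
  rw [measureReal_congr Iio_ae_eq_Iic, measureReal_volume_restrict_Ioo_zero_one_Iic hu]

lemma eq_volume_restrict_Ioo_zero_one_of_measureReal_Iio_le_le_measureReal_Iic
    (μ : Measure ℝ) [IsProbabilityMeasure μ]
    (hIio : ∀ t ∈ Ioo (0 : ℝ) 1, μ.real (Iio t) ≤ t)
    (hIic : ∀ t ∈ Ioo (0 : ℝ) 1, t ≤ μ.real (Iic t)) :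
    μ = volume.restrict (Ioo 0 1) := by
  have hle : ∀ t, μ.real (Iic t) ≤ max t 0 := fun t =>
    le_of_forall_gt_imp_ge_of_dense fun s hs => by
      rcases lt_or_ge s 1 with hs1 | hs1
      · exact (measureReal_mono (Iic_subset_Iio.2 ((le_max_left _ _).trans_lt hs))).trans
          (hIio s ⟨(le_max_right _ _).trans_lt hs, hs1⟩)
      · exact measureReal_le_one.trans hs1
  have hge : ∀ t, min t 1 ≤ μ.real (Iic t) := fun t =>
    le_of_forall_lt_imp_le_of_dense fun s hs => by
      rcases le_or_gt s 0 with hs0 | hs0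
      · exact hs0.trans measureReal_nonneg
      · exact (hIic s ⟨hs0, hs.trans_le (min_le_right _ _)⟩).trans
          (measureReal_mono (Iic_subset_Iic.2 (hs.le.trans (min_le_left _ _))))
  refine Measure.ext_of_Iic _ _ fun t => ?_
  rw [volume_restrict_Ioo_zero_one_Iic, ← ofReal_measureReal]
  rcases le_or_gt t 0 with ht | ht
  · rw [ENNReal.ofReal_of_nonpos ((min_le_right _ _).trans ht), ENNReal.ofReal_eq_zero]
    simpa [ht] using hle t
  · congr 1
    refine le_antisymm (le_min measureReal_le_one ?_) (min_comm t 1 ▸ hge t)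
    simpa [ht.le] using hle t

lemma measureReal_prod_Iio_prod_univ_union_singleton_prod {β : Type*} [MeasurableSpace β]
    {ν : Measure ℝ} {μ : Measure β} [IsFiniteMeasure ν] [IsFiniteMeasure μ] (x : ℝ) {s : Set β}
    (hs : MeasurableSet s) :
    (ν.prod μ).real (Iio x ×ˢ univ ∪ {x} ×ˢ s) =
      ν.real (Iio x) * μ.real univ + ν.real {x} * μ.real s := by
  rw [measureReal_union _ ((measurableSet_singleton x).prod hs), measureReal_prod_prod,
    measureReal_prod_prod]
  exact disjoint_left.2 fun _ h1 h2 => h1.1.ne h2.1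

lemma ae_snd_mem_Icc_prod_volume_restrict_Ioo_zero_one (ν : Measure ℝ) :
    ∀ᵐ p ∂(ν.prod (volume.restrict (Ioo (0 : ℝ) 1))), p.2 ∈ Icc (0 : ℝ) 1 :=
  Measure.quasiMeasurePreserving_snd.ae
    ((ae_restrict_mem measurableSet_Ioo).mono fun _ hv => Ioo_subset_Icc_self hv)

lemma distributionalTransform_mono_right (ν : Measure ℝ) (x : ℝ) :
    Monotone (distributionalTransform ν x) :=
  fun _ _ h => by unfold distributionalTransform; gcongr

section FiniteMeasure

variable {ν : Measure ℝ} [IsFiniteMeasure ν]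

lemma measureReal_Iic_eq_add (x : ℝ) : ν.real (Iic x) = ν.real (Iio x) + ν.real {x} := by
  rw [← Iio_union_right, measureReal_union (by simp) (measurableSet_singleton x)]

lemma distributionalTransform_le_of_lt {x y u v : ℝ} (hxy : x < y) (hu : u ≤ 1) (hv : 0 ≤ v) :
    distributionalTransform ν x u ≤ distributionalTransform ν y v :=
  calc distributionalTransform ν x u ≤ ν.real (Iic x) := by
        rw [measureReal_Iic_eq_add, distributionalTransform]
        nlinarith [measureReal_nonneg (μ := ν) (s := {x})]
    _ ≤ ν.real (Iio y) := measureReal_mono (Iic_subset_Iio.2 hxy)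
    _ ≤ distributionalTransform ν y v :=
        le_add_of_nonneg_right (mul_nonneg hv measureReal_nonneg)

variable (ν) in
lemma measurable_distributionalTransform :
    Measurable (Function.uncurry (distributionalTransform ν)) := by
  have hIio : Monotone fun x => ν.real (Iio x) := fun _ _ h => measureReal_mono (Iio_subset_Iio h)
  have hIic : Monotone fun x => ν.real (Iic x) :=
    fun _ _ h => measureReal_mono (Iic_subset_Iic.2 h)
  have hatom : Measurable fun x => ν.real {x} := by
    simp_rw [eq_sub_of_add_eq' (measureReal_Iic_eq_add _).symm]
    exact hIic.measurable.sub hIio.measurable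
  exact (hIio.measurable.comp measurable_fst).add (measurable_snd.mul (hatom.comp measurable_fst))

lemma measureReal_preimage_distributionalTransform_Iio_le {x u : ℝ} (hu : u ∈ Icc (0 : ℝ) 1) :
    (ν.prod (volume.restrict (Ioo (0 : ℝ) 1))).real
      (Function.uncurry (distributionalTransform ν) ⁻¹' Iio (distributionalTransform ν x u)) ≤
      distributionalTransform ν x u := by
  have hsub : Function.uncurry (distributionalTransform ν) ⁻¹' Iio (distributionalTransform ν x u)
      ≤ᵐ[ν.prod (volume.restrict (Ioo (0 : ℝ) 1))]
      (Iio x ×ˢ univ ∪ {x} ×ˢ Iio u : Set (ℝ × ℝ)) := by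
    filter_upwards [ae_snd_mem_Icc_prod_volume_restrict_Ioo_zero_one ν] with ⟨y, v⟩ hv
      (hlt : distributionalTransform ν y v < distributionalTransform ν x u)
    rcases lt_trichotomy y x with h | rfl | h
    · exact Or.inl ⟨h, trivial⟩
    · exact Or.inr ⟨rfl, lt_of_not_ge fun h =>
        hlt.not_ge (distributionalTransform_mono_right ν y h)⟩
    · exact absurd hlt (distributionalTransform_le_of_lt h hu.2 hv.1).not_gt
  calc _ ≤ (ν.prod (volume.restrict (Ioo (0 : ℝ) 1))).real (Iio x ×ˢ univ ∪ {x} ×ˢ Iio u) :=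
        ENNReal.toReal_mono (measure_ne_top _ _) (measure_mono_ae hsub)
    _ = distributionalTransform ν x u := by
        rw [measureReal_prod_Iio_prod_univ_union_singleton_prod x measurableSet_Iio,
          measureReal_volume_restrict_Ioo_zero_one_Iio hu, probReal_univ, mul_one, mul_comm,
          distributionalTransform]

lemma le_measureReal_preimage_distributionalTransform_Iic {x u : ℝ} (hu : u ∈ Icc (0 : ℝ) 1) :
    distributionalTransform ν x u ≤ (ν.prod (volume.restrict (Ioo (0 : ℝ) 1))).real
      (Function.uncurry (distributionalTransform ν) ⁻¹' Iic (distributionalTransform ν x u)) := by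
  have hsub : (Iio x ×ˢ univ ∪ {x} ×ˢ Iic u : Set (ℝ × ℝ))
      ≤ᵐ[ν.prod (volume.restrict (Ioo (0 : ℝ) 1))]
      Function.uncurry (distributionalTransform ν) ⁻¹' Iic (distributionalTransform ν x u) := by
    filter_upwards [ae_snd_mem_Icc_prod_volume_restrict_Ioo_zero_one ν] with ⟨y, v⟩ hv hmem
    rcases hmem with ⟨h, -⟩ | ⟨rfl, h⟩
    · exact distributionalTransform_le_of_lt h hv.2 hu.1
    · exact distributionalTransform_mono_right ν _ h
  calc distributionalTransform ν x u
      = (ν.prod (volume.restrict (Ioo (0 : ℝ) 1))).real (Iio x ×ˢ univ ∪ {x} ×ˢ Iic u) := by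
        rw [measureReal_prod_Iio_prod_univ_union_singleton_prod x measurableSet_Iic,
          measureReal_volume_restrict_Ioo_zero_one_Iic hu, probReal_univ, mul_one, mul_comm,
          distributionalTransform]
    _ ≤ _ := ENNReal.toReal_mono (measure_ne_top _ _) (measure_mono_ae hsub)

end FiniteMeasure

section ProbabilityMeasure

variable (ν : Measure ℝ) [IsProbabilityMeasure ν]

lemma measureReal_Iio_eq_leftLim_cdf (x : ℝ) : ν.real (Iio x) = Function.leftLim (cdf ν) x := by
  have h := (cdf ν).measure_Iio (tendsto_cdf_atBot ν) x
  rw [measure_cdf, sub_zero] at h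
  rw [measureReal_def, h, ENNReal.toReal_ofReal]
  exact (cdf_nonneg ν (x - 1)).trans ((cdf ν).mono.le_leftLim (sub_one_lt x))

lemma exists_measureReal_Iio_le_le_measureReal_Iic {t : ℝ} (ht : t ∈ Ioo (0 : ℝ) 1) :
    ∃ x, ν.real (Iio x) ≤ t ∧ t ≤ ν.real (Iic x) := by
  set S := {x | t ≤ cdf ν x}
  have hS : S.Nonempty := ((tendsto_cdf_atTop ν).eventually (eventually_ge_nhds ht.2)).exists
  have hSb : BddBelow S := by
    obtain ⟨b, hb⟩ :=
      ((tendsto_cdf_atBot ν).eventually (eventually_lt_nhds ht.1)).exists_forall_of_atBot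
    exact ⟨b, fun x hx => le_of_not_gt fun hxb => (hb x hxb.le).not_ge hx⟩
  refine ⟨sInf S, ?_, ?_⟩
  · rw [measureReal_Iio_eq_leftLim_cdf]
    refine le_of_tendsto ((cdf ν).mono.tendsto_leftLim _)
      (eventually_nhdsWithin_of_forall fun x hx => ?_)
    exact le_of_lt (not_le.1 fun h => (not_le.2 hx) (csInf_le hSb h))
  · rw [← cdf_eq_real]
    refine ge_of_tendsto (((cdf ν).right_continuous _).mono Ioi_subset_Ici_self)
      (eventually_nhdsWithin_of_forall fun x hx => ?_)
    obtain ⟨s, hs, hsx⟩ := exists_lt_of_csInf_lt hS hx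
    exact hs.trans ((cdf ν).mono hsx.le)

lemma exists_distributionalTransform_eq {t : ℝ} (ht : t ∈ Ioo (0 : ℝ) 1) :
    ∃ x, ∃ u ∈ Icc (0 : ℝ) 1, distributionalTransform ν x u = t := by
  obtain ⟨x, hlo, hhi⟩ := exists_measureReal_Iio_le_le_measureReal_Iic ν ht
  rw [measureReal_Iic_eq_add] at hhi
  refine ⟨x, (t - ν.real (Iio x)) / ν.real {x}, ⟨div_nonneg (sub_nonneg.2 hlo) measureReal_nonneg,
    div_le_one_of_le₀ (by linarith) measureReal_nonneg⟩, ?_⟩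
  -- If `ν {x} = 0`, then `u = 0` (division by zero) and `ν (Iio x) = t` by `hlo` and `hhi`.
  rcases eq_or_ne (ν.real {x}) 0 with h | h
  · simp only [distributionalTransform, h, mul_zero]
    linarith
  · simp only [distributionalTransform, div_mul_cancel₀ _ h]
    ring

theorem map_distributionalTransform_prod_volume_restrict_Ioo_zero_one :
    (ν.prod (volume.restrict (Ioo (0 : ℝ) 1))).map (Function.uncurry (distributionalTransform ν)) =
      volume.restrict (Ioo 0 1) := by
  have hD := measurable_distributionalTransform ν
  have := Measure.isProbabilityMeasure_map (μ := ν.prod (volume.restrict (Ioo (0 : ℝ) 1)))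
    hD.aemeasurable
  refine eq_volume_restrict_Ioo_zero_one_of_measureReal_Iio_le_le_measureReal_Iic _
    (fun t ht => ?_) (fun t ht => ?_) <;>
  obtain ⟨x, u, hu, rfl⟩ := exists_distributionalTransform_eq ν ht
  · rw [map_measureReal_apply hD measurableSet_Iio]
    exact measureReal_preimage_distributionalTransform_Iio_le hu
  · rw [map_measureReal_apply hD measurableSet_Iic]
    exact le_measureReal_preimage_distributionalTransform_Iic hu

end ProbabilityMeasure

end ProbabilityTheory

/-- The distributional transform `F̂_ξ(ξ; U)` of a random variable `ξ` with an independent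
uniform(0,1) randomization `U` is uniformly distributed on `(0,1)`. -/
theorem stmt_9 {Ω : Type*} [MeasurableSpace Ω] (P : Measure Ω) [IsProbabilityMeasure P]
    (ξ U : Ω → ℝ) (hξm : Measurable ξ) (hUm : Measurable U)
    (hU : Measure.map U P = (MeasureTheory.volume.restrict (Set.Ioo (0:ℝ) 1)))
    (hindep : ProbabilityTheory.IndepFun ξ U P)
    (T : Ω → ℝ)
    (hT : T = fun ω =>
      (P {a | ξ a < ξ ω}).toReal + U ω * (P {a | ξ a = ξ ω}).toReal) :
    Measure.map T P = (MeasureTheory.volume.restrict (Set.Ioo (0:ℝ) 1)) := by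
  have := Measure.isProbabilityMeasure_map (μ := P) hξm.aemeasurable
  have hT' : T = Function.uncurry (distributionalTransform (P.map ξ)) ∘ fun ω => (ξ ω, U ω) := by
    funext ω
    simp only [hT, Function.comp_apply, Function.uncurry_apply_pair, distributionalTransform,
      map_measureReal_apply hξm measurableSet_Iio,
      map_measureReal_apply hξm (measurableSet_singleton _)]
    rfl
  rw [hT', ← Measure.map_map (measurable_distributionalTransform _) (hξm.prodMk hUm),
    (indepFun_iff_map_prod_eq_prod_map_map hξm.aemeasurable hUm.aemeasurable).1 hindep, hU]
  exact map_distributionalTransform_prod_volume_restrict_Ioo_zero_one _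
end
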